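/- Let n ≥ 2 and let B ∈ ℝ^{n+1} be a unit vector with first entry b, and let u* = (u_{*0}; u_{*1}) ∈ bd K_{n+1} with u_{*0} > 0. Assume Bᵀ û* = 0 and 2b² < 1 (so that H ∩ bd K_{n+1} = {u*}, where H = {u* + t B : t ∈ ℝ}). Let {u_k} be the alternating projection sequence: u₀ ∈ H with u₀ ∉ K_{n+1}, and u_{k+1} is the unique nearest point of H to the unique nearest point of K_{n+1} to u_k. Write u_k = u* + t_k B with t_k ∈ ℝ. Then lim_{k→∞} ((1 − 2b²)/(√2 u_{*0})) · k^{1/2} |t_k| = 1. -/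

import Mathlib

/-- Euclidean norm of the tail `x₁` of `x = (x₀; x₁) ∈ ℝ × ℝⁿ`. -/
noncomputable def tailNorm {n : ℕ} (x : EuclideanSpace ℝ (Fin (n + 1))) : ℝ :=
  Real.sqrt (∑ i : Fin n, x i.succ ^ 2)

/-- The second-order cone `K_{n+1} = {(x₀; x₁) : ‖x₁‖ ≤ x₀}`. -/
def soc (n : ℕ) : Set (EuclideanSpace ℝ (Fin (n + 1))) :=
  {x | tailNorm x ≤ x 0}

/-- The boundary of the second-order cone: `{(x₀; x₁) : ‖x₁‖ = x₀}`. -/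
def socBd (n : ℕ) : Set (EuclideanSpace ℝ (Fin (n + 1))) :=
  {x | tailNorm x = x 0}

/-- The interior of the second-order cone: `{(x₀; x₁) : ‖x₁‖ < x₀}`. -/
def socInt (n : ℕ) : Set (EuclideanSpace ℝ (Fin (n + 1))) :=
  {x | tailNorm x < x 0}

/-- `x̂ = (x₀; −x₁)` for `x = (x₀; x₁)`. -/
def socHat {n : ℕ} (x : EuclideanSpace ℝ (Fin (n + 1))) : EuclideanSpace ℝ (Fin (n + 1)) :=
  WithLp.toLp 2 (fun i => if i = 0 then x 0 else -(x i))

/-- `B t` viewed as an element of Euclidean space. -/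
def mvE {m p : ℕ} (B : Matrix (Fin m) (Fin p) ℝ) (t : Fin p → ℝ) : EuclideanSpace ℝ (Fin m) :=
  WithLp.toLp 2 (fun i => B.mulVec t i)

/-- A Euclidean vector viewed as a plain function. -/
def toFun {m : ℕ} (x : EuclideanSpace ℝ (Fin m)) : Fin m → ℝ := x

open Filter Topology
open scoped RealInnerProductSpace

/-!
Write `u' = u* + s B` and `b = B 0`. Because `⟪B, û*⟫ = 0`, the tail of `u'` has norm
`N(s) = √((u*₀ + s b)² + (1 - 2b²) s²)`, which exceeds `|u'₀|` when `s ≠ 0`; hence `u'` lies in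
neither `K` nor `-K`, and its projection onto `K` is `p = ((u'₀ + N)/2) (1; u'₁/N)`. Projecting `p`
back onto `H` gives `t_{k+1} = t_k (1 - t_k² q(t_k))` for an explicit continuous `q > 0` with
`q(0) = (1 - 2b²)² / (4 u*₀²)`. Testing the variational inequality of `p` at `u* ∈ K` gives
`0 < ‖p - u*‖² ≤ s ⟪B, p - u*⟫ = s² (1 - s² q(s))`, where `p ≠ u*` because `u' - p` is a multiple
of `p̂` while `B ⊥ û*`. So `|t_k|` decreases, the increments `t_{k+1}⁻² - t_k⁻²` are bounded below
and tend to `2 q(0)`, and by Cesàro `k t_k² → 1 / (2 q(0))`.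
-/

section Projection
variable {E : Type*} [NormedAddCommGroup E] [InnerProductSpace ℝ E]

lemma eq_of_norm_sub_le_of_inner_sub_nonpos {u p v : E} (hp : ⟪u - p, v - p⟫ ≤ 0)
    (hv : ‖u - v‖ ≤ ‖u - p‖) : v = p := by
  have hexp : ‖u - v‖ ^ 2 = ‖u - p‖ ^ 2 - 2 * ⟪u - p, v - p⟫ + ‖v - p‖ ^ 2 := by
    rw [← norm_sub_sq_real, sub_sub_sub_cancel_right]
  have hsq : ‖u - v‖ ^ 2 ≤ ‖u - p‖ ^ 2 := pow_le_pow_left₀ (norm_nonneg _) hv 2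
  have : ‖v - p‖ ^ 2 ≤ 0 := by linarith
  rw [← sub_eq_zero, ← norm_eq_zero]
  exact pow_eq_zero_iff two_ne_zero |>.mp (le_antisymm this (sq_nonneg _))

lemma eq_inner_of_forall_norm_sub_le {a B v : E} (hB : ‖B‖ = 1) {s : ℝ}
    (h : ∀ r : ℝ, ‖v - (a + s • B)‖ ≤ ‖v - (a + r • B)‖) : s = ⟪B, v - a⟫ := by
  have hexp : ∀ r : ℝ,
      ‖v - (a + r • B)‖ ^ 2 = ‖v - a‖ ^ 2 - ⟪B, v - a⟫ ^ 2 + (r - ⟪B, v - a⟫) ^ 2 := by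
    intro r
    rw [← sub_sub, norm_sub_sq_real, real_inner_smul_right, norm_smul, hB, real_inner_comm,
      Real.norm_eq_abs, mul_one, sq_abs]
    ring
  have hsq := pow_le_pow_left₀ (norm_nonneg _) (h ⟪B, v - a⟫) 2
  rw [hexp, hexp, sub_self] at hsq
  nlinarith [sq_nonneg (s - ⟪B, v - a⟫)]

end Projection

def socTail {n : ℕ} : EuclideanSpace ℝ (Fin (n + 1)) →ₗ[ℝ] EuclideanSpace ℝ (Fin n) where
  toFun x := WithLp.toLp 2 (fun i => x i.succ)
  map_add' _ _ := rfl
  map_smul' _ _ := rfl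

@[simp] lemma socTail_apply {n : ℕ} (x : EuclideanSpace ℝ (Fin (n + 1))) (i : Fin n) :
    socTail x i = x i.succ := rfl

lemma tailNorm_eq_norm_socTail {n : ℕ} (x : EuclideanSpace ℝ (Fin (n + 1))) :
    tailNorm x = ‖socTail x‖ := by
  simp [tailNorm, EuclideanSpace.norm_eq]

lemma inner_eq_head_add_socTail {n : ℕ} (x y : EuclideanSpace ℝ (Fin (n + 1))) :
    ⟪x, y⟫ = x 0 * y 0 + ⟪socTail x, socTail y⟫ := by
  simp [PiLp.inner_apply, Fin.sum_univ_succ, mul_comm]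

lemma sq_norm_socTail {n : ℕ} (x : EuclideanSpace ℝ (Fin (n + 1))) :
    ‖socTail x‖ ^ 2 = ‖x‖ ^ 2 - x 0 ^ 2 := by
  rw [← real_inner_self_eq_norm_sq, ← real_inner_self_eq_norm_sq, inner_eq_head_add_socTail]
  ring

lemma inner_socHat {n : ℕ} (x y : EuclideanSpace ℝ (Fin (n + 1))) :
    ⟪x, socHat y⟫ = x 0 * y 0 - ⟪socTail x, socTail y⟫ := by
  have htail : socTail (socHat y) = -socTail y := by
    ext i; simp [socHat, Fin.succ_ne_zero]
  rw [inner_eq_head_add_socTail, htail, inner_neg_right]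
  simp [socHat, sub_eq_add_neg]

lemma inner_socTail_eq_of_inner_socHat_eq_zero {n : ℕ} {x y : EuclideanSpace ℝ (Fin (n + 1))}
    (h : ⟪x, socHat y⟫ = 0) : ⟪socTail x, socTail y⟫ = x 0 * y 0 := by
  rw [inner_socHat] at h
  linarith

-- The projection onto `soc n`, valid only when `|x 0| < tailNorm x`.
noncomputable def socProj {n : ℕ} (x : EuclideanSpace ℝ (Fin (n + 1))) :
    EuclideanSpace ℝ (Fin (n + 1)) :=
  WithLp.toLp 2 (fun i => if i = 0 then (x 0 + tailNorm x) / 2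
    else (x 0 + tailNorm x) / (2 * tailNorm x) * x i)

section SocProj
variable {n : ℕ} (x : EuclideanSpace ℝ (Fin (n + 1)))

lemma socProj_zero : socProj x 0 = (x 0 + tailNorm x) / 2 := by
  simp [socProj]

lemma socTail_socProj :
    socTail (socProj x) = ((x 0 + tailNorm x) / (2 * tailNorm x)) • socTail x := by
  ext i; simp [socProj, Fin.succ_ne_zero]

variable {x} (hx : |x 0| < tailNorm x)
include hx

lemma tailNorm_socProj : tailNorm (socProj x) = (x 0 + tailNorm x) / 2 := by
  have hN : 0 < tailNorm x := (abs_nonneg _).trans_lt hx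
  have hxN : 0 ≤ x 0 + tailNorm x := by linarith [neg_abs_le (x 0)]
  rw [tailNorm_eq_norm_socTail, socTail_socProj, norm_smul, ← tailNorm_eq_norm_socTail,
    Real.norm_of_nonneg (by positivity)]
  field_simp

lemma socProj_mem_soc : socProj x ∈ soc n :=
  (tailNorm_socProj hx).trans_le (socProj_zero x).ge

lemma inner_sub_socProj_nonpos {w : EuclideanSpace ℝ (Fin (n + 1))} (hw : w ∈ soc n) :
    ⟪x - socProj x, w - socProj x⟫ ≤ 0 := by
  have hN : 0 < tailNorm x := (abs_nonneg _).trans_lt hx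
  have hxN : x 0 < tailNorm x := (le_abs_self _).trans_lt hx
  have hCS : ⟪socTail x, socTail w⟫ ≤ tailNorm x * w 0 := by
    calc ⟪socTail x, socTail w⟫ ≤ ‖socTail x‖ * ‖socTail w‖ := real_inner_le_norm _ _
      _ ≤ tailNorm x * w 0 := by
        rw [← tailNorm_eq_norm_socTail, ← tailNorm_eq_norm_socTail]
        exact mul_le_mul_of_nonneg_left hw hN.le
  have hexp : ⟪x - socProj x, w - socProj x⟫
      = (x 0 - tailNorm x) / (2 * tailNorm x) * (tailNorm x * w 0 - ⟪socTail x, socTail w⟫) := by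
    rw [inner_eq_head_add_socTail, map_sub, map_sub, socTail_socProj, PiLp.sub_apply,
      PiLp.sub_apply, socProj_zero]
    simp only [inner_sub_left, inner_sub_right, inner_smul_left, inner_smul_right,
      real_inner_self_eq_norm_sq, ← tailNorm_eq_norm_socTail, real_inner_comm (socTail x),
      RCLike.conj_to_real]
    field_simp
    ring
  rw [hexp]
  exact mul_nonpos_of_nonpos_of_nonneg
    (div_nonpos_of_nonpos_of_nonneg (by linarith) (by positivity)) (by linarith)

lemma sub_socProj_eq_smul_socHat :
    x - socProj x = ((x 0 - tailNorm x) / (x 0 + tailNorm x)) • socHat (socProj x) := by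
  have hN : 0 < tailNorm x := (abs_nonneg _).trans_lt hx
  have hxN : 0 < x 0 + tailNorm x := by linarith [neg_abs_le (x 0)]
  ext i
  rcases Fin.eq_zero_or_eq_succ i with rfl | ⟨j, rfl⟩
  · simp [socHat, socProj]
    field_simp
    ring
  · simp [socHat, socProj, Fin.succ_ne_zero]
    field_simp
    ring

end SocProj

lemma tendsto_div_natCast_of_tendsto_sub {a : ℕ → ℝ} {A : ℝ}
    (h : Tendsto (fun k => a (k + 1) - a k) atTop (𝓝 A)) :
    Tendsto (fun k : ℕ => a k / k) atTop (𝓝 A) := by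
  have hinit : Tendsto (fun k : ℕ => (k : ℝ)⁻¹ * a 0) atTop (𝓝 0) := by
    simpa using tendsto_inv_atTop_nhds_zero_nat.mul_const (a 0)
  have := hinit.add h.cesaro
  rw [zero_add] at this
  refine this.congr fun k => ?_
  rw [Finset.sum_range_sub (f := a)]
  ring

lemma inv_sq_mul_one_sub_sub_inv_sq {s Q : ℝ} (hs : s ≠ 0) (hQ : 1 - s ^ 2 * Q ≠ 0) :
    ((s * (1 - s ^ 2 * Q)) ^ 2)⁻¹ - (s ^ 2)⁻¹ = Q * (2 - s ^ 2 * Q) / (1 - s ^ 2 * Q) ^ 2 := by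
  field_simp
  ring

section CubicRecursion
variable {q : ℝ → ℝ} (hq : Continuous q) (hq_pos : ∀ s, 0 < q s) (hq_lt : ∀ s, s ^ 2 * q s < 1)
  {t : ℕ → ℝ} (ht0 : t 0 ≠ 0) (hrec : ∀ k, t k ≠ 0 → t (k + 1) = t k * (1 - t k ^ 2 * q (t k)))
include hq_lt ht0 hrec

lemma ne_zero_of_cubicRec (k : ℕ) : t k ≠ 0 := by
  induction k with
  | zero => exact ht0
  | succ k ih =>
    rw [hrec k ih]
    exact mul_ne_zero ih (sub_pos.2 (hq_lt _)).ne'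

include hq_pos in
lemma abs_le_of_cubicRec (k : ℕ) : |t k| ≤ |t 0| := by
  refine antitone_nat_of_succ_le (f := fun k => |t k|) (fun k => ?_) (Nat.zero_le k)
  have h0 : 0 ≤ t k ^ 2 * q (t k) := mul_nonneg (sq_nonneg _) (hq_pos _).le
  rw [hrec k (ne_zero_of_cubicRec hq_lt ht0 hrec k), abs_mul,
    abs_of_pos (sub_pos.2 (hq_lt _))]
  exact mul_le_of_le_one_right (abs_nonneg _) (by linarith)

lemma inv_sq_succ_sub_of_cubicRec (k : ℕ) :
    (t (k + 1) ^ 2)⁻¹ - (t k ^ 2)⁻¹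
      = q (t k) * (2 - t k ^ 2 * q (t k)) / (1 - t k ^ 2 * q (t k)) ^ 2 := by
  rw [hrec k (ne_zero_of_cubicRec hq_lt ht0 hrec k)]
  exact inv_sq_mul_one_sub_sub_inv_sq (ne_zero_of_cubicRec hq_lt ht0 hrec k)
    (sub_pos.2 (hq_lt _)).ne'

include hq hq_pos in
lemma tendsto_zero_of_cubicRec : Tendsto t atTop (𝓝 0) := by
  obtain ⟨s₀, -, hmin⟩ := isCompact_Icc.exists_isMinOn
    (Set.nonempty_Icc.2 (neg_le_self (abs_nonneg (t 0)))) hq.continuousOn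
  -- Each increment of `t k⁻²` is at least `min q` over the orbit's range, so `t k⁻²` grows linearly.
  have hstep : ∀ k, q s₀ ≤ (t (k + 1) ^ 2)⁻¹ - (t k ^ 2)⁻¹ := by
    intro k
    have hy0 : 0 ≤ t k ^ 2 * q (t k) := mul_nonneg (sq_nonneg _) (hq_pos _).le
    have hy1 := hq_lt (t k)
    rw [inv_sq_succ_sub_of_cubicRec hq_lt ht0 hrec, le_div_iff₀ (by nlinarith)]
    calc q s₀ * (1 - t k ^ 2 * q (t k)) ^ 2 ≤ q (t k) * 1 := by
          refine mul_le_mul (hmin (abs_le.1 (abs_le_of_cubicRec hq_pos hq_lt ht0 hrec k)))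
            (by nlinarith) (sq_nonneg _) (hq_pos _).le
      _ ≤ q (t k) * (2 - t k ^ 2 * q (t k)) :=
          mul_le_mul_of_nonneg_left (by linarith) (hq_pos _).le
  have hgrowth : ∀ k : ℕ, k * q s₀ ≤ (t k ^ 2)⁻¹ := by
    intro k
    induction k with
    | zero => simp [sq_nonneg]
    | succ k ih => push_cast; linarith [hstep k]
  have hinv : Tendsto (fun k => (t k ^ 2)⁻¹) atTop atTop :=
    tendsto_atTop_mono hgrowth (tendsto_natCast_atTop_atTop.atTop_mul_const (hq_pos s₀))
  have hsq : Tendsto (fun k => t k ^ 2) atTop (𝓝 0) :=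
    hinv.inv_tendsto_atTop.congr fun k => inv_inv _
  have habs := (Real.continuous_sqrt.tendsto 0).comp hsq
  rw [Real.sqrt_zero] at habs
  exact tendsto_zero_iff_abs_tendsto_zero _ |>.2 (habs.congr fun k => Real.sqrt_sq_eq_abs (t k))

include hq hq_pos in
lemma tendsto_natCast_mul_sq_of_cubicRec :
    Tendsto (fun k : ℕ => k * t k ^ 2) atTop (𝓝 (2 * q 0)⁻¹) := by
  have hP : ContinuousAt (fun s => q s * (2 - s ^ 2 * q s) / (1 - s ^ 2 * q s) ^ 2) 0 :=
    by fun_prop (disch := simp)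
  have hincr : Tendsto (fun k => (t (k + 1) ^ 2)⁻¹ - (t k ^ 2)⁻¹) atTop (𝓝 (2 * q 0)) := by
    have := hP.tendsto.comp (tendsto_zero_of_cubicRec hq hq_pos hq_lt ht0 hrec)
    simp only [ne_eq, OfNat.ofNat_ne_zero, not_false_eq_true, zero_pow, zero_mul, sub_zero,
      one_pow, div_one] at this
    rw [mul_comm]
    refine this.congr fun k => ?_
    exact (inv_sq_succ_sub_of_cubicRec hq_lt ht0 hrec k).symm
  refine ((tendsto_div_natCast_of_tendsto_sub (a := fun k => (t k ^ 2)⁻¹) hincr).inv₀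
    (mul_ne_zero two_ne_zero (hq_pos 0).ne')).congr fun k => ?_
  rw [inv_div, div_inv_eq_mul]

include hq hq_pos in
lemma tendsto_sqrt_mul_abs_of_cubicRec :
    Tendsto (fun k : ℕ => √(2 * q 0) * √k * |t k|) atTop (𝓝 1) := by
  have h2q : 0 < 2 * q 0 := mul_pos two_pos (hq_pos 0)
  have := (Real.continuous_sqrt.tendsto _).comp
    ((tendsto_natCast_mul_sq_of_cubicRec hq hq_pos hq_lt ht0 hrec).const_mul (2 * q 0))
  rw [mul_inv_cancel₀ h2q.ne', Real.sqrt_one] at this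
  refine this.congr fun k => ?_
  simp only [Function.comp_apply]
  rw [Real.sqrt_mul h2q.le, Real.sqrt_mul (Nat.cast_nonneg k), Real.sqrt_sq_eq_abs, mul_assoc]

end CubicRecursion

noncomputable def lineTailNorm (u₀ b s : ℝ) : ℝ :=
  √((u₀ + s * b) ^ 2 + (1 - 2 * b ^ 2) * s ^ 2)

noncomputable def shrinkCoeff (u₀ b s : ℝ) : ℝ :=
  (1 - 2 * b ^ 2) ^ 2 * (lineTailNorm u₀ b s + u₀)
    / (2 * lineTailNorm u₀ b s * (lineTailNorm u₀ b s + (u₀ + s * b)) ^ 2)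

section LineTailNorm
variable {u₀ b : ℝ}

lemma sq_lineTailNorm (hb : 2 * b ^ 2 < 1) (s : ℝ) :
    lineTailNorm u₀ b s ^ 2 = (u₀ + s * b) ^ 2 + (1 - 2 * b ^ 2) * s ^ 2 :=
  Real.sq_sqrt (by nlinarith [sq_nonneg (u₀ + s * b), sq_nonneg s])

lemma abs_lt_lineTailNorm (hb : 2 * b ^ 2 < 1) {s : ℝ} (hs : s ≠ 0) :
    |u₀ + s * b| < lineTailNorm u₀ b s := by
  rw [← Real.sqrt_sq_eq_abs]
  exact Real.sqrt_lt_sqrt (sq_nonneg _) (by nlinarith [sq_pos_of_ne_zero hs])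

lemma lineTailNorm_zero (hu₀ : 0 < u₀) : lineTailNorm u₀ b 0 = u₀ := by
  simp [lineTailNorm, Real.sqrt_sq hu₀.le]

lemma lineTailNorm_pos (hu₀ : 0 < u₀) (hb : 2 * b ^ 2 < 1) (s : ℝ) : 0 < lineTailNorm u₀ b s := by
  rcases eq_or_ne s 0 with rfl | hs
  · rwa [lineTailNorm_zero hu₀]
  · exact (abs_nonneg _).trans_lt (abs_lt_lineTailNorm (u₀ := u₀) hb hs)

lemma lineTailNorm_add_pos (hu₀ : 0 < u₀) (hb : 2 * b ^ 2 < 1) (s : ℝ) :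
    0 < lineTailNorm u₀ b s + (u₀ + s * b) := by
  rcases eq_or_ne s 0 with rfl | hs
  · rw [lineTailNorm_zero hu₀]; linarith
  · linarith [neg_abs_le (u₀ + s * b), abs_lt_lineTailNorm (u₀ := u₀) hb hs]

lemma continuous_lineTailNorm : Continuous (lineTailNorm u₀ b) := by
  unfold lineTailNorm; fun_prop

lemma continuous_shrinkCoeff (hu₀ : 0 < u₀) (hb : 2 * b ^ 2 < 1) :
    Continuous (shrinkCoeff u₀ b) := by
  have := continuous_lineTailNorm (u₀ := u₀) (b := b)
  refine Continuous.div (by fun_prop) (by fun_prop) fun s => ?_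
  have := lineTailNorm_pos hu₀ hb s
  have := lineTailNorm_add_pos hu₀ hb s
  positivity

lemma shrinkCoeff_pos (hu₀ : 0 < u₀) (hb : 2 * b ^ 2 < 1) (s : ℝ) : 0 < shrinkCoeff u₀ b s := by
  have := lineTailNorm_pos hu₀ hb s
  have := lineTailNorm_add_pos hu₀ hb s
  have : 0 < 1 - 2 * b ^ 2 := by linarith
  unfold shrinkCoeff
  positivity

lemma shrinkCoeff_zero (hu₀ : 0 < u₀) :
    shrinkCoeff u₀ b 0 = (1 - 2 * b ^ 2) ^ 2 / (4 * u₀ ^ 2) := by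
  have := hu₀.ne'
  rw [shrinkCoeff, lineTailNorm_zero hu₀, zero_mul, add_zero]
  field_simp
  ring

lemma mul_one_sub_sq_mul_shrinkCoeff (hu₀ : 0 < u₀) (hb : 2 * b ^ 2 < 1) (s : ℝ) :
    s * (1 - s ^ 2 * shrinkCoeff u₀ b s)
      = b * ((u₀ + s * b + lineTailNorm u₀ b s) / 2)
        + (u₀ + s * b + lineTailNorm u₀ b s) / (2 * lineTailNorm u₀ b s)
          * (b * u₀ + s * (1 - b ^ 2)) - 2 * b * u₀ := by
  have hN := (lineTailNorm_pos hu₀ hb s).ne'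
  have hNx := (lineTailNorm_add_pos hu₀ hb s).ne'
  have hN2 := sq_lineTailNorm (u₀ := u₀) hb s
  rw [shrinkCoeff]
  generalize lineTailNorm u₀ b s = N at *
  field_simp
  linear_combination (-(b * (N ^ 2 - (u₀ + s * b) ^ 2) - (1 - 2 * b ^ 2) * s * (N + (u₀ + s * b))
    + b * (1 - 2 * b ^ 2) * s ^ 2)) * hN2

lemma sqrt_two_mul_shrinkCoeff_zero (hu₀ : 0 < u₀) (hb : 2 * b ^ 2 < 1) :
    √(2 * shrinkCoeff u₀ b 0) = (1 - 2 * b ^ 2) / (√2 * u₀) := by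
  have hsq : 2 * shrinkCoeff u₀ b 0 = ((1 - 2 * b ^ 2) / (√2 * u₀)) ^ 2 := by
    rw [shrinkCoeff_zero hu₀, div_pow, mul_pow, Real.sq_sqrt zero_le_two]
    ring
  rw [hsq, Real.sqrt_sq (div_nonneg (by linarith) (by positivity))]

end LineTailNorm

section TangentLine
variable {n : ℕ} {B ustar : EuclideanSpace ℝ (Fin (n + 1))}

lemma tailNorm_line (hB : ‖B‖ = 1) (hustar : ustar ∈ socBd n)
    (horth : ⟪B, socHat ustar⟫ = 0) (s : ℝ) :
    tailNorm (ustar + s • B) = lineTailNorm (ustar 0) (B 0) s := by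
  have hustar' : ‖socTail ustar‖ = ustar 0 := by rw [← tailNorm_eq_norm_socTail]; exact hustar
  rw [tailNorm_eq_norm_socTail, ← Real.sqrt_sq (norm_nonneg _), lineTailNorm, map_add, map_smul,
    norm_add_sq_real, norm_smul, real_inner_smul_right, real_inner_comm,
    inner_socTail_eq_of_inner_socHat_eq_zero horth, mul_pow, hustar', sq_norm_socTail B, hB,
    Real.norm_eq_abs, sq_abs]
  ring_nf

lemma abs_lt_tailNorm_line (hB : ‖B‖ = 1) (hustar : ustar ∈ socBd n)
    (horth : ⟪B, socHat ustar⟫ = 0) (hb : 2 * B 0 ^ 2 < 1) {s : ℝ} (hs : s ≠ 0) :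
    |(ustar + s • B) 0| < tailNorm (ustar + s • B) := by
  rw [tailNorm_line hB hustar horth]
  simpa using abs_lt_lineTailNorm (u₀ := ustar 0) hb hs

lemma inner_socProj_line_sub (hB : ‖B‖ = 1) (hustar : ustar ∈ socBd n) (hustar0 : 0 < ustar 0)
    (horth : ⟪B, socHat ustar⟫ = 0) (hb : 2 * B 0 ^ 2 < 1) (s : ℝ) :
    ⟪B, socProj (ustar + s • B) - ustar⟫ = s * (1 - s ^ 2 * shrinkCoeff (ustar 0) (B 0) s) := by
  rw [mul_one_sub_sq_mul_shrinkCoeff hustar0 hb, inner_sub_right, inner_eq_head_add_socTail B,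
    inner_eq_head_add_socTail B ustar, socProj_zero, socTail_socProj, tailNorm_line hB hustar horth,
    inner_smul_right, map_add, map_smul, inner_add_right, inner_smul_right,
    real_inner_self_eq_norm_sq, sq_norm_socTail, hB, inner_socTail_eq_of_inner_socHat_eq_zero horth]
  simp only [PiLp.add_apply, PiLp.smul_apply, smul_eq_mul]
  ring

lemma socProj_line_ne (hB : ‖B‖ = 1) (hustar : ustar ∈ socBd n)
    (horth : ⟪B, socHat ustar⟫ = 0) (hb : 2 * B 0 ^ 2 < 1) {s : ℝ} (hs : s ≠ 0) :
    socProj (ustar + s • B) ≠ ustar := by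
  intro h
  have hnormal := sub_socProj_eq_smul_socHat (abs_lt_tailNorm_line hB hustar horth hb hs)
  rw [h, add_sub_cancel_left] at hnormal
  have := congrArg (⟪B, ·⟫) hnormal
  simp only [inner_smul_right, real_inner_self_eq_norm_sq, hB, horth] at this
  exact hs (by simpa using this)

lemma sq_mul_shrinkCoeff_lt_one (hB : ‖B‖ = 1) (hustar : ustar ∈ socBd n) (hustar0 : 0 < ustar 0)
    (horth : ⟪B, socHat ustar⟫ = 0) (hb : 2 * B 0 ^ 2 < 1) (s : ℝ) :
    s ^ 2 * shrinkCoeff (ustar 0) (B 0) s < 1 := by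
  rcases eq_or_ne s 0 with rfl | hs
  · simp
  have hVI := inner_sub_socProj_nonpos (abs_lt_tailNorm_line hB hustar horth hb hs)
    (w := ustar) hustar.le
  set p := socProj (ustar + s • B)
  have hpos : 0 < ‖p - ustar‖ ^ 2 :=
    pow_pos (norm_pos_iff.2 (sub_ne_zero.2 (socProj_line_ne hB hustar horth hb hs))) 2
  have hkey : ‖p - ustar‖ ^ 2 ≤ s * ⟪B, p - ustar⟫ := by
    rw [show ustar + s • B - p = s • B - (p - ustar) by abel, show ustar - p = -(p - ustar) by abel,
      inner_neg_right, inner_sub_left, real_inner_smul_left, real_inner_self_eq_norm_sq] at hVI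
    linarith
  rw [inner_socProj_line_sub hB hustar hustar0 horth hb] at hkey
  have : 0 < s ^ 2 * (1 - s ^ 2 * shrinkCoeff (ustar 0) (B 0) s) := by nlinarith
  linarith [(mul_pos_iff_of_pos_left (sq_pos_of_ne_zero hs)).1 this]

end TangentLine

theorem stmt13_general (n : ℕ)
    (B : EuclideanSpace ℝ (Fin (n + 1))) (hB : ‖B‖ = 1)
    (ustar : EuclideanSpace ℝ (Fin (n + 1))) (hustar : ustar ∈ socBd n)
    (hustar0 : 0 < ustar 0)
    (horth : ⟪B, socHat ustar⟫ = 0) (hb : 2 * (B 0) ^ 2 < 1)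
    (H : Set (EuclideanSpace ℝ (Fin (n + 1))))
    (hH : H = {u | ∃ t : ℝ, u = ustar + t • B})
    (u : ℕ → EuclideanSpace ℝ (Fin (n + 1)))
    (hu0K : u 0 ∉ soc n)
    (v : ℕ → EuclideanSpace ℝ (Fin (n + 1)))
    (hapm : ∀ k : ℕ, v k ∈ soc n ∧ (∀ w ∈ soc n, ‖u k - v k‖ ≤ ‖u k - w‖)
      ∧ u (k + 1) ∈ H ∧ (∀ w ∈ H, ‖v k - u (k + 1)‖ ≤ ‖v k - w‖))
    (t : ℕ → ℝ) (ht : ∀ k, u k = ustar + t k • B) :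
    Tendsto (fun k : ℕ =>
        ((1 - 2 * (B 0) ^ 2) / (Real.sqrt 2 * ustar 0)) * Real.sqrt k * |t k|)
      atTop (𝓝 1) := by
  have hrec : ∀ k, t k ≠ 0 →
      t (k + 1) = t k * (1 - t k ^ 2 * shrinkCoeff (ustar 0) (B 0) (t k)) := by
    intro k hk
    obtain ⟨hvK, hvmin, -, hlmin⟩ := hapm k
    have hx := abs_lt_tailNorm_line hB hustar horth hb hk
    have hv : v k = socProj (u k) := by
      rw [ht k] at hvmin ⊢
      exact eq_of_norm_sub_le_of_inner_sub_nonpos (inner_sub_socProj_nonpos hx hvK)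
        (hvmin _ (socProj_mem_soc hx))
    have hline : t (k + 1) = ⟪B, v k - ustar⟫ :=
      eq_inner_of_forall_norm_sub_le hB fun r => by
        rw [← ht]; exact hlmin _ (hH ▸ ⟨r, rfl⟩)
    rw [hline, hv, ht k, inner_socProj_line_sub hB hustar hustar0 horth hb]
  have ht0 : t 0 ≠ 0 := by
    intro h0
    apply hu0K
    rw [ht 0, h0, zero_smul, add_zero]
    exact hustar.le
  have hlim := tendsto_sqrt_mul_abs_of_cubicRec (continuous_shrinkCoeff hustar0 hb)
    (shrinkCoeff_pos hustar0 hb) (sq_mul_shrinkCoeff_lt_one hB hustar hustar0 horth hb) ht0 hrec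
  rwa [sqrt_two_mul_shrinkCoeff_zero hustar0 hb] at hlim

/-- Case 2 with `p = 1`: the alternating projection sequence `u_k = u* + t_k B` on the line
`H = {u* + t B : t ∈ ℝ}` satisfies `lim ((1 − 2b²)/(√2 u_{*0})) √k |t_k| = 1`. -/
theorem stmt13 (n : ℕ) (hn : 2 ≤ n)
    (B : EuclideanSpace ℝ (Fin (n + 1))) (hB : ‖B‖ = 1)
    (ustar : EuclideanSpace ℝ (Fin (n + 1))) (hustar : ustar ∈ socBd n)
    (hustar0 : 0 < ustar 0)
    (horth : ⟪B, socHat ustar⟫ = 0) (hb : 2 * (B 0) ^ 2 < 1)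
    (H : Set (EuclideanSpace ℝ (Fin (n + 1))))
    (hH : H = {u | ∃ t : ℝ, u = ustar + t • B})
    (u : ℕ → EuclideanSpace ℝ (Fin (n + 1)))
    (hu0H : u 0 ∈ H) (hu0K : u 0 ∉ soc n)
    (v : ℕ → EuclideanSpace ℝ (Fin (n + 1)))
    (hapm : ∀ k : ℕ, v k ∈ soc n ∧ (∀ w ∈ soc n, ‖u k - v k‖ ≤ ‖u k - w‖)
      ∧ u (k + 1) ∈ H ∧ (∀ w ∈ H, ‖v k - u (k + 1)‖ ≤ ‖v k - w‖))
    (t : ℕ → ℝ) (ht : ∀ k, u k = ustar + t k • B) :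
    Tendsto (fun k : ℕ =>
        ((1 - 2 * (B 0) ^ 2) / (Real.sqrt 2 * ustar 0)) * Real.sqrt k * |t k|)
      atTop (𝓝 1) :=
  stmt13_general n B hB ustar hustar hustar0 horth hb H hH u hu0K v hapm t ht
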